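/- arXiv:2509.17841 — 4 statements merged into one kernel-verified Lean document; each statement's English description precedes it below -/
import Mathlib

section
/- Let f : ℕ → ℝ be superadditive with f(n) ≥ n for all n, and let s ≥ 1 be real. Define g(n) = f(n)^s / n for n ≥ 1, g₂(n) = max_{1 ≤ i ≤ n} g(i), and f₂'(n) = g₂(n)². Then for every n ≥ 1: f(n)^{2s} ≤ n² · f₂'(n) ≤ 4 · f(n)^{2s}. -/
/-!
The lower bound is `g n ≤ g₂ n`. For the upper bound take the largest `m ≤ n` with
`g m = g₂ n`. Superadditivity gives `f (2m) ≥ 2 f m`, hence `g (2m) ≥ 2^(s-1) g m ≥ g m`, so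
maximality of `m` forces `n < 2m`. Then `n g₂ n = n f(m)^s / m ≤ 2 f(m)^s ≤ 2 f(n)^s`, since a
nonnegative superadditive function is monotone.
-/

theorem monotone_of_superadditive {f : ℕ → ℝ} (h0 : ∀ n, 0 ≤ f n)
    (hsup : ∀ n m, f n + f m ≤ f (n + m)) : Monotone f :=
  monotone_nat_of_le_succ fun n => by linarith [hsup n 1, h0 1]

theorem rpow_div_le_rpow_div_two_mul {x y s c : ℝ} (hx : 0 ≤ x) (hxy : 2 * x ≤ y) (hs : 1 ≤ s)
    (hc : 0 ≤ c) : x ^ s / c ≤ y ^ s / (2 * c) := by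
  have h2 : 2 * x ^ s ≤ y ^ s :=
    calc 2 * x ^ s ≤ 2 ^ s * x ^ s := by
          gcongr; exact Real.self_le_rpow_of_one_le one_le_two hs
      _ = (2 * x) ^ s := (Real.mul_rpow zero_le_two hx).symm
      _ ≤ y ^ s := Real.rpow_le_rpow (by positivity) hxy (by linarith)
  rw [← mul_div_mul_left (x ^ s) c two_ne_zero]
  gcongr

theorem exists_mem_Icc_lt_two_mul_of_isGreatest {g : ℕ → ℝ}
    (hg : ∀ m, 1 ≤ m → g m ≤ g (2 * m)) {n : ℕ} {M : ℝ}
    (hM : IsGreatest (g '' Set.Icc 1 n) M) : ∃ m ∈ Set.Icc 1 n, n < 2 * m ∧ g m = M := by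
  classical
  obtain ⟨⟨m₀, ⟨hm₀, hm₀n⟩, hgm₀⟩, hmax⟩ := hM
  let P : ℕ → Prop := fun m => 1 ≤ m ∧ g m = M
  set m := Nat.findGreatest P n
  obtain ⟨hm, hgm⟩ : P m := Nat.findGreatest_spec hm₀n ⟨hm₀, hgm₀⟩
  refine ⟨m, ⟨hm, Nat.findGreatest_le n⟩, ?_, hgm⟩
  by_contra! h2m
  have hP2m : P (2 * m) :=
    ⟨by omega, le_antisymm (hmax ⟨2 * m, ⟨by omega, h2m⟩, rfl⟩) (hgm ▸ hg m hm)⟩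
  have := Nat.le_findGreatest h2m hP2m
  omega

/-- For superadditive `f` with `f(n) ≥ n` and real `s ≥ 1`, with `g(n) = f(n)^s / n`,
`g₂(n) = max_{1 ≤ i ≤ n} g(i)` and `f₂'(n) = g₂(n)²`, we have
`f(n)^{2s} ≤ n²·f₂'(n) ≤ 4·f(n)^{2s}` for all `n ≥ 1`. -/
theorem squeeze_f2' (f : ℕ → ℝ) (hf : ∀ n : ℕ, (n : ℝ) ≤ f n)
    (hsup : ∀ n m, f n + f m ≤ f (n + m)) (s : ℝ) (hs : 1 ≤ s)
    (g g₂ f₂' : ℕ → ℝ)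
    (hg : ∀ n, g n = f n ^ s / (n : ℝ))
    (hg₂ : ∀ n, 1 ≤ n → IsGreatest (g '' Set.Icc 1 n) (g₂ n))
    (hf₂ : ∀ n, f₂' n = g₂ n ^ 2) :
    ∀ n : ℕ, 1 ≤ n →
      f n ^ (2 * s) ≤ (n : ℝ) ^ 2 * f₂' n ∧ (n : ℝ) ^ 2 * f₂' n ≤ 4 * f n ^ (2 * s) := by
  intro n hn
  have hf0 : ∀ k, 0 ≤ f k := fun k => (Nat.cast_nonneg k).trans (hf k)
  have hn0 : (0 : ℝ) < n := by exact_mod_cast hn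
  have hlower : f n ^ s ≤ n * g₂ n := by
    have := (hg₂ n hn).2 ⟨n, ⟨hn, le_rfl⟩, rfl⟩
    rwa [hg, div_le_iff₀' hn0] at this
  have hdouble : ∀ m, 1 ≤ m → g m ≤ g (2 * m) := fun m _ => by
    rw [hg, hg, Nat.cast_mul, Nat.cast_two]
    exact rpow_div_le_rpow_div_two_mul (hf0 m) (by simpa [two_mul] using hsup m m) hs m.cast_nonneg
  obtain ⟨m, ⟨hm, hmn⟩, hnm, hgm⟩ := exists_mem_Icc_lt_two_mul_of_isGreatest hdouble (hg₂ n hn)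
  have hupper : n * g₂ n ≤ 2 * f n ^ s := by
    have hm0 : (0 : ℝ) < m := by exact_mod_cast hm
    calc n * g₂ n = n * (f m ^ s / m) := by rw [← hgm, hg]
      _ ≤ 2 * m * (f m ^ s / m) := by
          gcongr
          · exact div_nonneg (Real.rpow_nonneg (hf0 m) s) hm0.le
          · exact_mod_cast hnm.le
      _ = 2 * f m ^ s := by field_simp
      _ ≤ 2 * f n ^ s := by
          gcongr
          · exact hf0 m
          · exact monotone_of_superadditive hf0 hsup hmn
  rw [hf₂, mul_comm 2 s, Real.rpow_mul (hf0 n), Real.rpow_two, ← mul_pow,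
    show (4 : ℝ) = 2 ^ 2 by norm_num, ← mul_pow]
  have hfs0 : 0 ≤ f n ^ s := Real.rpow_nonneg (hf0 n) s
  exact ⟨pow_le_pow_left₀ hfs0 hlower 2, pow_le_pow_left₀ (hfs0.trans hlower) hupper 2⟩
end

section
/- Let A be a type and w : List A a list that is not duplicate-free (i.e. some letter occurs twice in w). Then w has a prefix of the form u ++ (x :: v) ++ [x] for some x : A and lists u, v : List A such that the list u ++ (x :: v) has pairwise distinct entries. In particular the suffix x :: (v ++ [x]) begins and ends with the same letter, no proper subword of it begins and ends with the same letter, and no letter of u occurs in x :: (v ++ [x]). -/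
/-! Take the shortest prefix `p ++ [x]` of `w` that is not duplicate-free. Then `p` is
duplicate-free and `x ∈ p`; writing `p = u ++ x :: v`, the letters of `u` are distinct from
those of `x :: v`, hence from those of `x :: (v ++ [x])`. -/

theorem List.exists_prefix_append_singleton_nodup_mem {A : Type*} {w : List A}
    (hw : ¬ w.Nodup) : ∃ p x, p ++ [x] <+: w ∧ p.Nodup ∧ x ∈ p := by
  induction w using List.reverseRecOn with
  | nil => exact absurd List.nodup_nil hw
  | append_singleton w x ih =>
    by_cases hnd : w.Nodup
    · refine ⟨w, x, List.prefix_refl _, hnd, ?_⟩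
      by_contra hx
      rw [← List.concat_eq_append, List.nodup_concat] at hw
      exact hw ⟨hx, hnd⟩
    · obtain ⟨p, y, hpre, hp, hy⟩ := ih hnd
      exact ⟨p, y, hpre.trans (List.prefix_append w [x]), hp, hy⟩

/-- Every word with a repeated letter has a tight prefix: a prefix of the form
`u ++ (x :: v) ++ [x]` where `u ++ (x :: v)` has pairwise distinct entries.  In particular
the suffix `x :: (v ++ [x])` is revolving, and no letter of `u` occurs in it. -/
theorem exists_tight_prefix {A : Type*} (w : List A) (hw : ¬ w.Nodup) :
    ∃ (x : A) (u v : List A),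
      (u ++ (x :: v) ++ [x]) <+: w ∧
      (u ++ (x :: v)).Nodup ∧
      ∀ a ∈ u, a ∉ (x :: (v ++ [x])) := by
  obtain ⟨p, x, hpre, hp, hx⟩ := List.exists_prefix_append_singleton_nodup_mem hw
  obtain ⟨u, v, rfl⟩ := List.append_of_mem hx
  refine ⟨x, u, v, hpre, hp, fun a hau hax => ?_⟩
  have hav : a ∈ x :: v := by
    simp only [List.mem_cons, List.mem_append] at hax ⊢
    tauto
  exact List.disjoint_of_nodup_append hp hau hav
end

section
/- Let G be a group, X a type, and π : FreeGroup X → G a surjective group homomorphism. Let Z = X ⊕ X and let θ : FreeGroup Z → G be the homomorphism with θ(of(inl x)) = π(of x) and θ(of(inr x)) = π(of x)⁻¹. Let L ⊆ FreeGroup Z be the set of elements represented by nonempty positive words (products of generators of(z) for z : Z, with no inverses) lying in ker θ. Then ker θ equals the normal closure of L in FreeGroup Z. -/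
/-!
Modulo the normal closure `N` of `L`, each `of z⁻¹` equals the positive generator
`of (Sum.swap z)`, because `of z * of (Sum.swap z)` is a nonempty positive word killed by `θ`.
Hence every `w` is congruent mod `N` to a positive word `p`; if `w ∈ ker θ` then so is `p`,
and `p` lies in `N` (trivially if `p = 1`, otherwise because `p ∈ L`). So `w ∈ N`.
-/

namespace FreeGroup

variable {α : Type*}

theorem of_mul_of_ne_one (a b : α) : (of a * of b : FreeGroup α) ≠ 1 := by
  classical
  rw [Ne, mul_eq_one_iff_eq_inv]
  intro h
  simpa [invRev] using congrArg toWord h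

theorem exists_mem_closure_range_of_mk_eq (N : Subgroup (FreeGroup α)) [N.Normal]
    (bar : α → α) (hbar : ∀ a, of a * of (bar a) ∈ N) (w : FreeGroup α) :
    ∃ p ∈ Submonoid.closure (Set.range (of : α → FreeGroup α)),
      (w : FreeGroup α ⧸ N) = p := by
  induction w using FreeGroup.induction_on with
  | C1 => exact ⟨1, one_mem _, rfl⟩
  | of a => exact ⟨of a, Submonoid.subset_closure ⟨a, rfl⟩, rfl⟩
  | inv_of a _ =>
    refine ⟨of (bar a), Submonoid.subset_closure ⟨bar a, rfl⟩, ?_⟩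
    have hpair : (of a : FreeGroup α ⧸ N) * of (bar a) = 1 :=
      (QuotientGroup.eq_one_iff _).mpr (hbar a)
    rw [QuotientGroup.mk_inv, inv_eq_of_mul_eq_one_right hpair]
  | mul u v hu hv =>
    obtain ⟨p, hp, hup⟩ := hu
    obtain ⟨q, hq, hvq⟩ := hv
    exact ⟨p * q, mul_mem hp hq, by rw [QuotientGroup.mk_mul, QuotientGroup.mk_mul, hup, hvq]⟩

end FreeGroup

open FreeGroup in
theorem positive_presentation_general {G : Type*} [Group G] {X : Type*}
    (π : FreeGroup X →* G)
    (θ : FreeGroup (X ⊕ X) →* G)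
    (hθ : θ = FreeGroup.lift
      (Sum.elim (fun x => π (FreeGroup.of x)) (fun x => (π (FreeGroup.of x))⁻¹)))
    (L : Set (FreeGroup (X ⊕ X)))
    (hL : L = {w | w ∈ Submonoid.closure
        (Set.range (FreeGroup.of : (X ⊕ X) → FreeGroup (X ⊕ X))) ∧ w ≠ 1 ∧ θ w = 1}) :
    θ.ker = Subgroup.normalClosure L := by
  set N := Subgroup.normalClosure L
  have hLN : L ⊆ N := Subgroup.subset_normalClosure
  have hNker : N ≤ θ.ker := Subgroup.normalClosure_le_normal fun w hw => (hL ▸ hw).2.2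
  have hswap : ∀ z, of z * of (Sum.swap z) ∈ N := fun z => hLN <| hL ▸
    ⟨mul_mem (Submonoid.subset_closure ⟨z, rfl⟩) (Submonoid.subset_closure ⟨_, rfl⟩),
      of_mul_of_ne_one _ _, by cases z <;> simp [hθ]⟩
  refine le_antisymm (fun w hw => ?_) hNker
  obtain ⟨p, hp, hwp⟩ := exists_mem_closure_range_of_mk_eq N Sum.swap hswap w
  have hwp' : w⁻¹ * p ∈ N := QuotientGroup.eq.mp hwp
  have hpN : p ∈ N := by
    by_cases hp1 : p = 1
    · exact hp1 ▸ one_mem N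
    · have hθp : θ p = 1 := by
        simpa [(MonoidHom.mem_ker).mp hw] using hNker hwp'
      exact hLN (hL ▸ ⟨hp, hp1, hθp⟩)
  simpa using mul_mem hpN (inv_mem hwp')

/-- Let `π : FreeGroup X → G` be surjective, `Z = X ⊕ X`, and `θ : FreeGroup Z → G` send
`of (inl x) ↦ π (of x)` and `of (inr x) ↦ π (of x)⁻¹`.  Then the kernel of `θ` is the
normal closure of the set `L` of nonempty positive words lying in `ker θ`. -/
theorem positive_presentation {G : Type*} [Group G] {X : Type*}
    (π : FreeGroup X →* G) (hπ : Function.Surjective π)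
    (θ : FreeGroup (X ⊕ X) →* G)
    (hθ : θ = FreeGroup.lift
      (Sum.elim (fun x => π (FreeGroup.of x)) (fun x => (π (FreeGroup.of x))⁻¹)))
    (L : Set (FreeGroup (X ⊕ X)))
    (hL : L = {w | w ∈ Submonoid.closure
        (Set.range (FreeGroup.of : (X ⊕ X) → FreeGroup (X ⊕ X))) ∧ w ≠ 1 ∧ θ w = 1}) :
    θ.ker = Subgroup.normalClosure L :=
  positive_presentation_general π θ hθ L hL
end

section
/- With the necklace setup on ZMod n (white set W, black set B), let v₁, v₂, v₃ ∈ B be distinct black beads such that v₂ lies on the counterclockwise open arc from v₁ to v₃ and this arc contains at most J black beads. Let y₁ be the number of white beads on the counterclockwise open arc from v₁ to v₂ and y₂ the number on the counterclockwise open arc from v₂ to v₃. Then for B' = B \ {v₂}: μ_J(W,B') ≤ μ_J(W,B) − y₁·y₂. -/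
/-- The least positive number of counterclockwise steps from `a` to `b` on the cycle `ZMod n`. -/
def stepsTo {n : ℕ} [NeZero n] (a b : ZMod n) : ℕ :=
  Nat.find (p := fun d => 0 < d ∧ a + (d : ZMod n) = b) <| by
    by_cases hba : b = a
    · refine ⟨n, Nat.pos_of_ne_zero (NeZero.ne n), ?_⟩
      simp [hba, ZMod.natCast_self]
    · refine ⟨(b - a).val, ?_, ?_⟩
      · refine Nat.pos_of_ne_zero fun hz => hba ?_
        have h0 : b - a = 0 := (ZMod.val_eq_zero _).mp hz
        exact sub_eq_zero.mp h0
      · have h1 : (((b - a).val : ℕ) : ZMod n) = b - a := ZMod.natCast_rightInverse (b - a)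
        rw [h1]; ring

/-- The counterclockwise open arc from `a` to `b` on the necklace `ZMod n`:
the beads strictly between `a` and `b`. -/
def arc {n : ℕ} [NeZero n] (a b : ZMod n) : Finset (ZMod n) :=
  (Finset.Ico 1 (stepsTo a b)).image fun k : ℕ => a + (k : ZMod n)

/-- `Pset W B j` is the set of ordered pairs of distinct white beads `(o₁, o₂)` for which
the counterclockwise open arc from `o₁` to `o₂` contains at least `j` black beads. -/
def Pset {n : ℕ} [NeZero n] (W B : Finset (ZMod n)) (j : ℕ) : Finset (ZMod n × ZMod n) :=
  (W ×ˢ W).filter fun p => p.1 ≠ p.2 ∧ j ≤ ((arc p.1 p.2) ∩ B).card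

/-- The `J`-mixture of the necklace with white beads `W` and black beads `B`. -/
def mixture {n : ℕ} [NeZero n] (J : ℕ) (W B : Finset (ZMod n)) : ℕ :=
  ∑ j ∈ Finset.Icc 1 J, (Pset W B j).card

/-!
Write `v₃ = v₁ + D` with `D` the step count from `v₁` to `v₃` and `v₂ = v₁ + k`, `0 < k < D`.
A white bead `o₁ = v₁ + s` before `v₂` and a white bead `o₂ = v₁ + t` after it have `s < k < t`,
so the arc from `o₁` to `o₂` is the image of the offsets `(s, t)`: it contains `v₂` and lies
inside the arc from `v₁` to `v₃`, hence carries some `j ∈ [1, J]` black beads. Erasing `v₂` drops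
that count to `j - 1`, so the pair leaves `P_j` while `P_j` only shrinks otherwise. Summing the
fibres of the `y₁ y₂` pairs over `j` gives the bound.
-/

open Finset

theorem ZMod.eq_of_natCast_eq_natCast {n i j : ℕ} (h : (i : ZMod n) = j) (hij : i ≤ j)
    (hji : j < i + n) : i = j := by
  have hdvd : n ∣ j - i := (ZMod.natCast_eq_zero_iff _ _).mp <| by
    rw [Nat.cast_sub hij, h, sub_self]
  have := Nat.eq_zero_of_dvd_of_lt hdvd (by omega)
  omega

section Necklace

variable {n : ℕ} [NeZero n]

theorem stepsTo_spec (a b : ZMod n) : 0 < stepsTo a b ∧ a + (stepsTo a b : ZMod n) = b :=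
  Nat.find_spec (p := fun d => 0 < d ∧ a + (d : ZMod n) = b) _

theorem stepsTo_le_card (a b : ZMod n) : stepsTo a b ≤ n := by
  obtain hba | hba := eq_or_ne (b - a).val 0
  · refine Nat.find_min' _ ⟨NeZero.pos n, ?_⟩
    rw [ZMod.natCast_self, add_zero, eq_comm, ← sub_eq_zero, ← ZMod.val_eq_zero, hba]
  · refine (Nat.find_min' _ ⟨Nat.pos_of_ne_zero hba, ?_⟩).trans (ZMod.val_lt _).le
    rw [ZMod.natCast_zmod_val]; abel

theorem stepsTo_self_add {a : ZMod n} {d : ℕ} (hd : 0 < d) (hdn : d ≤ n) :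
    stepsTo a (a + d) = d := by
  obtain ⟨hpos, hadd⟩ := stepsTo_spec a (a + d)
  have hle : stepsTo a (a + d) ≤ d := Nat.find_min' _ ⟨hd, rfl⟩
  exact ZMod.eq_of_natCast_eq_natCast (add_left_cancel hadd) hle (by omega)

theorem arc_add_natCast (a : ZMod n) {s t : ℕ} (hst : s < t) (hts : t ≤ s + n) :
    arc (a + (s : ZMod n)) (a + t) = (Ioo s t).image fun k : ℕ => a + (k : ZMod n) := by
  have hend : a + (t : ZMod n) = a + s + ((t - s : ℕ) : ZMod n) := by
    rw [Nat.cast_sub hst.le]; ring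
  have hIoo : Ioo s t = (Ico 1 (t - s)).image (s + ·) := by
    rw [image_add_left_Ico, Ico_add_one_left_eq_Ioo, Nat.add_sub_cancel' hst.le]
  rw [arc, hend, stepsTo_self_add (by omega) (by omega), hIoo, image_image]
  simp only [Function.comp_def, Nat.cast_add, add_assoc]

theorem arc_eq_image (a b : ZMod n) :
    arc a b = (Ioo 0 (stepsTo a b)).image fun k : ℕ => a + (k : ZMod n) := by
  rw [arc, ← Ico_add_one_left_eq_Ioo, zero_add]

theorem ne_and_mem_arc_and_arc_subset {a b v x y : ZMod n} (hv : v ∈ arc a b) (hx : x ∈ arc a v)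
    (hy : y ∈ arc v b) : x ≠ y ∧ v ∈ arc x y ∧ arc x y ⊆ arc a b := by
  obtain ⟨hD, hb⟩ := stepsTo_spec a b
  have hDn := stepsTo_le_card a b
  rw [← hb] at hy
  rw [arc_eq_image a b] at hv ⊢
  generalize stepsTo a b = D at *
  simp only [mem_image, mem_Ioo] at hv
  obtain ⟨k, ⟨hk0, hkD⟩, rfl⟩ := hv
  have hav := arc_add_natCast a (s := 0) (t := k) hk0 (by omega)
  have hvb := arc_add_natCast a hkD (by omega)
  simp only [Nat.cast_zero, add_zero] at hav
  rw [hav, mem_image] at hx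
  rw [hvb, mem_image] at hy
  obtain ⟨s, hs, rfl⟩ := hx
  obtain ⟨t, ht, rfl⟩ := hy
  rw [mem_Ioo] at hs ht
  rw [arc_add_natCast a (by omega : s < t) (by omega)]
  refine ⟨fun h => ?_, mem_image_of_mem _ (mem_Ioo.mpr ⟨hs.2, ht.1⟩),
    image_subset_image (Ioo_subset_Ioo (by omega) ht.2.le)⟩
  have := ZMod.eq_of_natCast_eq_natCast (add_left_cancel h) (by omega) (by omega)
  omega

theorem Pset_mono {W B B' : Finset (ZMod n)} (h : B ⊆ B') (j : ℕ) : Pset W B j ⊆ Pset W B' j :=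
  monotone_filter_right _ fun _ _ hp =>
    ⟨hp.1, hp.2.trans (card_le_card (inter_subset_inter_left h))⟩

variable {J : ℕ} {W B : Finset (ZMod n)} {v : ZMod n} {T : Finset (ZMod n × ZMod n)}

theorem card_Pset_erase_add_card_filter_le (hv : v ∈ B) (hTW : T ⊆ W ×ˢ W)
    (hT : ∀ p ∈ T, p.1 ≠ p.2 ∧ v ∈ arc p.1 p.2) (j : ℕ) :
    #(Pset W (B.erase v) j) + #{p ∈ T | #(arc p.1 p.2 ∩ B) = j} ≤ #(Pset W B j) := by
  rw [← card_union_of_disjoint ?_]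
  · refine card_le_card (union_subset (Pset_mono (erase_subset v B) j) fun p hp => ?_)
    rw [mem_filter] at hp
    exact mem_filter.mpr ⟨hTW hp.1, (hT p hp.1).1, hp.2.ge⟩
  · refine disjoint_right.mpr fun p hp hp' => ?_
    rw [mem_filter] at hp
    have hcount : #(arc p.1 p.2 ∩ B.erase v) + 1 = #(arc p.1 p.2 ∩ B) := by
      rw [inter_erase, card_erase_add_one (mem_inter.mpr ⟨(hT p hp.1).2, hv⟩)]
    have := (mem_filter.mp hp').2.2
    omega

theorem mixture_erase_add_card_le (hv : v ∈ B) (hTW : T ⊆ W ×ˢ W)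
    (hT : ∀ p ∈ T, p.1 ≠ p.2 ∧ v ∈ arc p.1 p.2 ∧ #(arc p.1 p.2 ∩ B) ≤ J) :
    mixture J W (B.erase v) + #T ≤ mixture J W B := by
  have hfib : #T = ∑ j ∈ Icc 1 J, #{p ∈ T | #(arc p.1 p.2 ∩ B) = j} :=
    card_eq_sum_card_fiberwise fun p hp =>
      mem_Icc.mpr ⟨card_pos.mpr ⟨v, mem_inter.mpr ⟨(hT p hp).2.1, hv⟩⟩, (hT p hp).2.2⟩
  rw [mixture, mixture, hfib, ← sum_add_distrib]
  exact sum_le_sum fun j _ =>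
    card_Pset_erase_add_card_filter_le hv hTW (fun p hp => ⟨(hT p hp).1, (hT p hp).2.1⟩) j

end Necklace

theorem mixture_erase_middle_black_general (n : ℕ) [NeZero n] (J : ℕ) (W B : Finset (ZMod n))
    (v₁ v₂ v₃ : ZMod n)
    (hv₂ : v₂ ∈ B)
    (hmid : v₂ ∈ arc v₁ v₃)
    (hJ : ((arc v₁ v₃) ∩ B).card ≤ J) :
    mixture J W (B.erase v₂) + ((arc v₁ v₂) ∩ W).card * ((arc v₂ v₃) ∩ W).card
      ≤ mixture J W B := by
  rw [← card_product]
  refine mixture_erase_add_card_le hv₂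
    (product_subset_product inter_subset_right inter_subset_right) fun p hp => ?_
  rw [mem_product, mem_inter, mem_inter] at hp
  obtain ⟨hne, hmem, hsub⟩ := ne_and_mem_arc_and_arc_subset hmid hp.1.1 hp.2.1
  exact ⟨hne, hmem, (card_le_card (inter_subset_inter hsub Subset.rfl)).trans hJ⟩

/-- Removing a black bead v₂ strictly between black beads v₁ and v₃ (with at most J black
beads on the arc from v₁ to v₃) decreases the J-mixture by at least y₁·y₂, where y₁, y₂
are the numbers of white beads on the arcs from v₁ to v₂ and from v₂ to v₃. -/
theorem mixture_erase_middle_black (n : ℕ) [NeZero n] (J : ℕ) (W B : Finset (ZMod n))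
    (hdisj : Disjoint W B) (v₁ v₂ v₃ : ZMod n)
    (hv₁ : v₁ ∈ B) (hv₂ : v₂ ∈ B) (hv₃ : v₃ ∈ B)
    (h12 : v₁ ≠ v₂) (h23 : v₂ ≠ v₃) (h13 : v₁ ≠ v₃)
    (hmid : v₂ ∈ arc v₁ v₃)
    (hJ : ((arc v₁ v₃) ∩ B).card ≤ J) :
    mixture J W (B.erase v₂) + ((arc v₁ v₂) ∩ W).card * ((arc v₂ v₃) ∩ W).card
      ≤ mixture J W B :=
  mixture_erase_middle_black_general n J W B v₁ v₂ v₃ hv₂ hmid hJ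
end
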